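/- Let V be an optimal computer. Then each of the sets 𝒵(V) = {T ∈ (0,1) : Z_V(T) is computable} and ℱ(V) = {T ∈ (0,1) : F_V(T) is computable} is dense in the open interval (0,1). -/

import Mathlib

/-!
Kraft's inequality dominates each Boltzmann factor `2^(-|p|/T)`, `T ≤ 1`, by the summable
`2^(-|p|)`, so `Z_V` is continuous on `(0,1]`; it is strictly increasing unless the empty program
halts. For `T₁ < T₂` the factors satisfy `2^(-|p|/T₁) = (2^(-|p|/T₂))^(T₂/T₁)`, and raising the
terms of a sum with at least two positive terms to a power `r > 1` gives strictly less than
raising the sum, so `Z_V(T₁) < Z_V(T₂)^(T₂/T₁)`: `F_V` is strictly decreasing unless `Dom V` is a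
singleton. A continuous injective function on an interval takes rational, hence computable,
values on a dense set of points by the intermediate value theorem. In the degenerate cases
`[] ∈ Dom V`, resp. `Dom V = {p}`, the function `Z_V ≡ 1`, resp. `F_V ≡ |p|`, is constant.
-/

open Filter Topology

/-- A set of finite binary strings is prefix-free if no string in it is a
proper prefix of another string in it. -/
def PrefixFree (S : Set (List Bool)) : Prop :=
  ∀ p ∈ S, ∀ q ∈ S, p <+: q → p = q

/-- A computer: a partial recursive function from finite binary strings to
finite binary strings whose domain is a nonempty prefix-free set. -/
structure Computer where
  f : List Bool →. List Bool
  partrec : Partrec f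
  dom_nonempty : f.Dom.Nonempty
  dom_prefixFree : PrefixFree f.Dom

/-- A computer `U` is optimal if for each computer `C` there is `d ∈ ℕ` such
that every `p ∈ Dom C` admits `q` with `U(q) = C(p)` and `|q| ≤ |p| + d`. -/
def Optimal (U : Computer) : Prop :=
  ∀ C : Computer, ∃ d : ℕ, ∀ p ∈ C.f.Dom,
    ∃ q : List Bool, U.f q = C.f p ∧ q.length ≤ p.length + d

/-- `H_C(s)`: the length of a shortest program for `C` printing `s`. -/
noncomputable def complexity (C : Computer) (s : List Bool) : ℕ :=
  sInf {n | ∃ p : List Bool, s ∈ C.f p ∧ p.length = n}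

/-- The `i`-th bit (for `i = 0, 1, 2, …`) of the base-two expansion of
`α - ⌊α⌋` with infinitely many zeros. -/
noncomputable def bitOf (α : ℝ) (i : ℕ) : Bool :=
  decide (⌊(α - ⌊α⌋) * 2 ^ (i + 1)⌋ % 2 = 1)

/-- `α↾n`: the first `n` bits of the base-two expansion of `α - ⌊α⌋`
with infinitely many zeros. -/
noncomputable def firstBits (α : ℝ) (n : ℕ) : List Bool :=
  (List.range n).map (bitOf α)

/-- A real `α` is computable if some total recursive `f : ℕ⁺ → ℚ` satisfies
`|α - f n| < 1/n` for all `n ≥ 1`. -/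
def ComputableReal (α : ℝ) : Prop :=
  ∃ f : ℕ → ℚ, Computable f ∧ ∀ n : ℕ, 0 < n → |α - (f n : ℝ)| < 1 / n

/-- `α` is weakly Chaitin `T`-random (w.r.t. the computer `U`). -/
def WeaklyChaitinTRandom (U : Computer) (T α : ℝ) : Prop :=
  ∃ c : ℕ, ∀ n : ℕ, 0 < n → T * n - c ≤ (complexity U (firstBits α n) : ℝ)

/-- `α` is Chaitin `T`-random (w.r.t. the computer `U`). -/
def ChaitinTRandom (U : Computer) (T α : ℝ) : Prop :=
  Tendsto (fun n : ℕ => (complexity U (firstBits α n) : ℝ) - T * n) atTop atTop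

/-- `α` is `T`-compressible (w.r.t. the computer `U`): `H(α↾n) ≤ Tn + o(n)`. -/
def TCompressible (U : Computer) (T α : ℝ) : Prop :=
  ∃ g : ℕ → ℝ, Tendsto (fun n : ℕ => g n / n) atTop (nhds 0) ∧
    ∀ n : ℕ, 0 < n → (complexity U (firstBits α n) : ℝ) ≤ T * n + g n

/-- The Boltzmann factor `2^(-|p|/T)` of a program `p`. -/
noncomputable def boltzmann (T : ℝ) (p : List Bool) : ℝ :=
  (2 : ℝ) ^ (-(p.length : ℝ) / T)

/-- Partition function `Z_C(T) = Σ_{p ∈ Dom C} 2^(-|p|/T)`. -/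
noncomputable def Zfun (C : Computer) (T : ℝ) : ℝ :=
  ∑' p : C.f.Dom, boltzmann T p.1

/-- Free energy `F_C(T) = -T log₂ Z_C(T)`. -/
noncomputable def Ffun (C : Computer) (T : ℝ) : ℝ :=
  -T * Real.logb 2 (Zfun C T)

/-- Energy `E_C(T) = Z_C(T)⁻¹ Σ_{p ∈ Dom C} |p| 2^(-|p|/T)`. -/
noncomputable def Efun (C : Computer) (T : ℝ) : ℝ :=
  (Zfun C T)⁻¹ * ∑' p : C.f.Dom, (p.1.length : ℝ) * boltzmann T p.1

/-- Statistical mechanical entropy `S_C(T) = (E_C(T) - F_C(T))/T`. -/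
noncomputable def Sfun (C : Computer) (T : ℝ) : ℝ :=
  (Efun C T - Ffun C T) / T

/-- `𝒵(V)`: the set of `T ∈ (0,1)` with `Z_V(T)` computable. -/
def setZ (V : Computer) : Set ℝ := {T | T ∈ Set.Ioo 0 1 ∧ ComputableReal (Zfun V T)}

/-- `ℱ(V)`: the set of `T ∈ (0,1)` with `F_V(T)` computable. -/
def setF (V : Computer) : Set ℝ := {T | T ∈ Set.Ioo 0 1 ∧ ComputableReal (Ffun V T)}

/-- `ℰ(V)`: the set of `T ∈ (0,1)` with `E_V(T)` computable. -/
def setE (V : Computer) : Set ℝ := {T | T ∈ Set.Ioo 0 1 ∧ ComputableReal (Efun V T)}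

/-- `𝒮(V)`: the set of `T ∈ (0,1)` with `S_V(T)` computable. -/
def setS (V : Computer) : Set ℝ := {T | T ∈ Set.Ioo 0 1 ∧ ComputableReal (Sfun V T)}

/-- `FP_w` (w.r.t. the optimal computer `U` fixing `H`): the set of `T ∈ (0,1)`
that are weakly Chaitin `T`-random and `T`-compressible. -/
def FPw (U : Computer) : Set ℝ :=
  {T | T ∈ Set.Ioo 0 1 ∧ WeaklyChaitinTRandom U T T ∧ TCompressible U T T}

/-- `FP` (w.r.t. the optimal computer `U` fixing `H`): the set of `T ∈ (0,1)`
that are Chaitin `T`-random and `T`-compressible. -/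
def FP (U : Computer) : Set ℝ :=
  {T | T ∈ Set.Ioo 0 1 ∧ ChaitinTRandom U T T ∧ TCompressible U T T}

/-- A computer is physically reasonable if its domain contains two strings of
different lengths. -/
def PhysicallyReasonable (C : Computer) : Prop :=
  ∃ p ∈ C.f.Dom, ∃ q ∈ C.f.Dom, p.length ≠ q.length

/-- A computable measure machine: `Z_C(1)` is a computable real. -/
def ComputableMeasureMachine (C : Computer) : Prop :=
  ComputableReal (Zfun C 1)

/-- `D` is the composition `C₀ ⊘ C₁ ⊘ ⋯ ⊘ C_{N-1}`: its domain consists of the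
concatenations `p₀p₁⋯p_{N-1}` with each `pᵢ ∈ Dom Cᵢ`, and on such a
concatenation it returns `C₀(p₀)`. -/
def IsComposition {N : ℕ} (C : Fin N → Computer) (hN : 0 < N) (D : Computer) : Prop :=
  (∀ l, l ∈ D.f.Dom ↔
      ∃ ps : Fin N → List Bool, (∀ i, ps i ∈ (C i).f.Dom) ∧ l = (List.ofFn ps).flatten) ∧
  (∀ ps : Fin N → List Bool, (∀ i, ps i ∈ (C i).f.Dom) →
      D.f ((List.ofFn ps).flatten) = (C ⟨0, hN⟩).f (ps ⟨0, hN⟩))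

/-- A sequence of computers is recursive if a single partial recursive function
uniformly computes all of them. -/
def RecursiveSeq (V : ℕ → Computer) : Prop :=
  ∃ F : ℕ × List Bool →. List Bool, Partrec F ∧ ∀ n p, (V n).f p = F (n, p)

open InformationTheory Set

lemma PrefixFree.eq_nil_of_nil_mem {S : Set (List Bool)} (hS : PrefixFree S) (hnil : [] ∈ S)
    {p : List Bool} (hp : p ∈ S) : p = [] :=
  (hS [] hnil p hp List.nil_prefix).symm

lemma PrefixFree.uniquelyDecodable {S : Set (List Bool)} (hS : PrefixFree S) (hnil : [] ∉ S) :
    UniquelyDecodable S := by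
  intro L₁
  induction L₁ with
  | nil =>
    intro L₂ _ h₂ hflat
    rcases L₂ with _ | ⟨w, L₂⟩
    · rfl
    · simp only [List.flatten_nil, List.flatten_cons, List.nil_eq, List.append_eq_nil_iff] at hflat
      exact absurd (hflat.1 ▸ h₂ w List.mem_cons_self) hnil
  | cons v L₁ ih =>
    intro L₂ h₁ h₂ hflat
    rcases L₂ with _ | ⟨w, L₂⟩
    · simp only [List.flatten_nil, List.flatten_cons, List.append_eq_nil_iff] at hflat
      exact absurd (hflat.1 ▸ h₁ v List.mem_cons_self) hnil
    · simp only [List.flatten_cons] at hflat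
      have hv := h₁ v List.mem_cons_self
      have hw := h₂ w List.mem_cons_self
      have hvw : v = w := by
        rcases List.prefix_or_prefix_of_prefix (List.prefix_append v L₁.flatten)
          (hflat ▸ List.prefix_append w L₂.flatten) with h | h
        · exact hS v hv w hw h
        · exact (hS w hw v hv h).symm
      subst hvw
      rw [ih L₂ (fun u hu => h₁ u (List.mem_cons_of_mem _ hu))
        (fun u hu => h₂ u (List.mem_cons_of_mem _ hu)) (List.append_cancel_left hflat)]

lemma PrefixFree.summable_two_pow_neg_length {S : Set (List Bool)} (hS : PrefixFree S) :
    Summable (fun p : S => (2⁻¹ : ℝ) ^ p.1.length) := by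
  by_cases hnil : [] ∈ S
  · have : Finite S := ((finite_singleton []).subset
      fun _ hp => hS.eq_nil_of_nil_mem hnil hp).to_subtype
    exact Summable.of_finite
  · refine summable_of_sum_le (c := 1) (fun _ => by positivity) fun u => ?_
    have hsub : ∀ w ∈ u.map (Function.Embedding.subtype _), w ∈ S := by
      simp only [Finset.mem_map, Function.Embedding.coe_subtype]
      rintro _ ⟨p, -, rfl⟩
      exact p.2
    have hu : UniquelyDecodable ((u.map (Function.Embedding.subtype _) : Finset _) : Set _) :=
      fun L₁ L₂ h₁ h₂ => hS.uniquelyDecodable hnil L₁ L₂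
        (fun w hw => hsub w (h₁ w hw)) (fun w hw => hsub w (h₂ w hw))
    simpa using kraft_mcmillan_inequality hu

lemma tsum_rpow_lt_rpow_tsum {ι : Type*} {x : ι → ℝ} (hx : ∀ j, 0 ≤ x j) (hs : Summable x)
    {r : ℝ} (hr : 1 < r) {i : ι} (hi0 : 0 < x i) (hi : x i < ∑' j, x j) :
    ∑' j, x j ^ r < (∑' j, x j) ^ r := by
  set S := ∑' j, x j
  have hS : 0 < S := hi0.trans hi
  have hsplit : ∀ y : ℝ, 0 < y → y ^ r = y * y ^ (r - 1) := fun y hy => by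
    rw [← Real.rpow_one_add' hy.le (by linarith), add_sub_cancel]
  have hle : ∀ j, x j ^ r ≤ x j * S ^ (r - 1) := fun j => by
    rcases (hx j).eq_or_lt with h | h
    · rw [← h, Real.zero_rpow (by linarith), zero_mul]
    · rw [hsplit _ h]
      gcongr
      exact hs.le_tsum j fun k _ => hx k
  have hlt : x i ^ r < x i * S ^ (r - 1) := by
    rw [hsplit _ hi0]
    gcongr
  calc ∑' j, x j ^ r < ∑' j, x j * S ^ (r - 1) :=
        Summable.tsum_lt_tsum hle hlt
          (.of_nonneg_of_le (fun j => Real.rpow_nonneg (hx j) r) hle (hs.mul_right _))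
          (hs.mul_right _)
    _ = S ^ r := by rw [tsum_mul_right, ← hsplit _ hS]

lemma ComputableReal.ratCast (q : ℚ) : ComputableReal q :=
  ⟨fun _ => q, Computable.const q, fun n hn => by simp only [sub_self, abs_zero]; positivity⟩

section Density

variable {α : Type*} [LinearOrder α] [TopologicalSpace α] [OrderTopology α] [DenselyOrdered α]
  [NoMinOrder α] [NoMaxOrder α]

lemma Ioo_subset_closure_of_forall_Icc_inter_nonempty {a b : α} {s : Set α}
    (h : ∀ a' b', a < a' → a' < b' → b' < b → (Icc a' b' ∩ s).Nonempty) :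
    Ioo a b ⊆ closure s := by
  intro x hx
  refine mem_closure_iff_nhds.mpr fun U hU => ?_
  obtain ⟨l, u, ⟨hlx, hxu⟩, hU⟩ := mem_nhds_iff_exists_Ioo_subset.mp hU
  obtain ⟨a', ha', ha'x⟩ := exists_between (max_lt hx.1 hlx)
  obtain ⟨b', hxb', hb'⟩ := exists_between (lt_min hx.2 hxu)
  obtain ⟨T, hT, hTs⟩ := h a' b' ((le_max_left _ _).trans_lt ha') (ha'x.trans hxb')
    (hb'.trans_le (min_le_left _ _))
  exact ⟨T, hU ⟨((le_max_right _ _).trans_lt ha').trans_le hT.1,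
    hT.2.trans_lt (hb'.trans_le (min_le_right _ _))⟩, hTs⟩

end Density

lemma Ioo_subset_closure_setOf_computableReal {f : ℝ → ℝ} {a b : ℝ}
    (hf : ContinuousOn f (Ioo a b)) (hinj : InjOn f (Ioo a b)) :
    Ioo a b ⊆ closure {T | T ∈ Ioo a b ∧ ComputableReal (f T)} := by
  refine Ioo_subset_closure_of_forall_Icc_inter_nonempty fun a' b' ha' hab' hb' => ?_
  have hsub : Icc a' b' ⊆ Ioo a b := Icc_subset_Ioo ha' hb'
  have hne : f a' ≠ f b' := hinj.ne (hsub (left_mem_Icc.mpr hab'.le))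
    (hsub (right_mem_Icc.mpr hab'.le)) hab'.ne
  obtain ⟨q, hq₁, hq₂⟩ := exists_rat_btwn (min_lt_max.mpr hne)
  have hIVT := intermediate_value_uIcc (hf.mono (uIcc_of_le hab'.le ▸ hsub))
  obtain ⟨T, hT, hTq⟩ := hIVT ⟨hq₁.le, hq₂.le⟩
  rw [uIcc_of_le hab'.le] at hT
  exact ⟨T, hT, hsub hT, hTq ▸ ComputableReal.ratCast q⟩

lemma boltzmann_pos (T : ℝ) (p : List Bool) : 0 < boltzmann T p :=
  Real.rpow_pos_of_pos two_pos _

lemma boltzmann_nil (T : ℝ) : boltzmann T [] = 1 := by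
  simp [boltzmann]

lemma boltzmann_le_two_pow_neg_length {T : ℝ} (hT₀ : 0 < T) (hT₁ : T ≤ 1) (p : List Bool) :
    boltzmann T p ≤ (2⁻¹ : ℝ) ^ p.length := by
  rw [boltzmann, inv_pow, ← Real.rpow_natCast, ← Real.rpow_neg zero_le_two]
  gcongr
  · norm_num
  · rw [neg_div, neg_le_neg_iff]
    exact le_div_self (Nat.cast_nonneg _) hT₀ hT₁

lemma boltzmann_lt_boltzmann {p : List Bool} (hp : p ≠ []) {T₁ T₂ : ℝ} (hT₁ : 0 < T₁)
    (h : T₁ < T₂) : boltzmann T₁ p < boltzmann T₂ p := by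
  have hlen : (0 : ℝ) < p.length := by exact_mod_cast List.length_pos_iff.mpr hp
  refine Real.rpow_lt_rpow_of_exponent_lt one_lt_two ?_
  rw [neg_div, neg_div, neg_lt_neg_iff]
  exact div_lt_div_of_pos_left hlen hT₁ h

lemma boltzmann_rpow {T₁ T₂ : ℝ} (hT₁ : T₁ ≠ 0) (hT₂ : T₂ ≠ 0) (p : List Bool) :
    boltzmann T₂ p ^ (T₂ / T₁) = boltzmann T₁ p := by
  rw [boltzmann, boltzmann, ← Real.rpow_mul zero_le_two]
  congr 1
  field_simp

namespace Computer

variable (V : Computer)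

lemma summable_boltzmann {T : ℝ} (hT₀ : 0 < T) (hT₁ : T ≤ 1) :
    Summable (fun p : V.f.Dom => boltzmann T p.1) :=
  .of_nonneg_of_le (fun p => (boltzmann_pos T p.1).le)
    (fun p => boltzmann_le_two_pow_neg_length hT₀ hT₁ p.1)
    V.dom_prefixFree.summable_two_pow_neg_length

lemma Zfun_pos {T : ℝ} (hT₀ : 0 < T) (hT₁ : T ≤ 1) : 0 < Zfun V T := by
  obtain ⟨p, hp⟩ := V.dom_nonempty
  exact (V.summable_boltzmann hT₀ hT₁).tsum_pos (fun q => (boltzmann_pos T q.1).le) ⟨p, hp⟩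
    (boltzmann_pos T p)

lemma Zfun_eq_boltzmann {p : List Bool} (hp : p ∈ V.f.Dom) (hV : ∀ q ∈ V.f.Dom, q = p)
    (T : ℝ) : Zfun V T = boltzmann T p := by
  unfold Zfun
  exact tsum_eq_single (⟨p, hp⟩ : V.f.Dom) fun q hq => absurd (Subtype.ext (hV q.1 q.2)) hq

lemma Zfun_eq_one_of_nil_mem (hnil : [] ∈ V.f.Dom) (T : ℝ) : Zfun V T = 1 := by
  rw [V.Zfun_eq_boltzmann hnil (fun _ hq => V.dom_prefixFree.eq_nil_of_nil_mem hnil hq),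
    boltzmann_nil]

lemma Ffun_eq_length {p : List Bool} (hp : p ∈ V.f.Dom) (hV : ∀ q ∈ V.f.Dom, q = p) {T : ℝ}
    (hT : T ≠ 0) : Ffun V T = p.length := by
  rw [Ffun, V.Zfun_eq_boltzmann hp hV, boltzmann, Real.logb_rpow two_pos (by norm_num)]
  field_simp

lemma boltzmann_lt_Zfun {p q : List Bool} (hp : p ∈ V.f.Dom) (hq : q ∈ V.f.Dom) (hpq : p ≠ q)
    {T : ℝ} (hT₀ : 0 < T) (hT₁ : T ≤ 1) : boltzmann T p < Zfun V T := by
  have hpair : ∑ r ∈ ({⟨p, hp⟩, ⟨q, hq⟩} : Finset V.f.Dom), boltzmann T r.1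
      = boltzmann T p + boltzmann T q :=
    Finset.sum_pair fun h => hpq (congrArg Subtype.val h)
  have hle := (V.summable_boltzmann hT₀ hT₁).sum_le_tsum ({⟨p, hp⟩, ⟨q, hq⟩} : Finset V.f.Dom)
    fun r _ => (boltzmann_pos T r.1).le
  rw [hpair] at hle
  exact (lt_add_of_pos_right _ (boltzmann_pos T q)).trans_le hle

lemma Zfun_continuousOn : ContinuousOn (Zfun V) (Ioc 0 1) :=
  continuousOn_tsum (fun _ => continuousOn_const.rpow
      (continuousOn_const.div continuousOn_id fun _ hT => hT.1.ne') fun _ _ => .inl two_ne_zero)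
    V.dom_prefixFree.summable_two_pow_neg_length fun p T hT => by
      rw [Real.norm_of_nonneg (boltzmann_pos T p.1).le]
      exact boltzmann_le_two_pow_neg_length hT.1 hT.2 p.1

lemma Zfun_strictMonoOn (hnil : [] ∉ V.f.Dom) : StrictMonoOn (Zfun V) (Ioc 0 1) := by
  intro T₁ hT₁ T₂ hT₂ h
  obtain ⟨p, hp⟩ := V.dom_nonempty
  have hlt : ∀ q : V.f.Dom, boltzmann T₁ q.1 < boltzmann T₂ q.1 := fun q =>
    boltzmann_lt_boltzmann (fun h => hnil (h ▸ q.2)) hT₁.1 h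
  exact (V.summable_boltzmann hT₁.1 hT₁.2).tsum_lt_tsum (fun q => (hlt q).le) (hlt ⟨p, hp⟩)
    (V.summable_boltzmann hT₂.1 hT₂.2)

lemma Ffun_continuousOn : ContinuousOn (Ffun V) (Ioc 0 1) :=
  continuousOn_id.neg.mul <|
    (V.Zfun_continuousOn.log fun _ hT => (V.Zfun_pos hT.1 hT.2).ne').div_const _

lemma Ffun_strictAntiOn {p q : List Bool} (hp : p ∈ V.f.Dom) (hq : q ∈ V.f.Dom) (hpq : p ≠ q) :
    StrictAntiOn (Ffun V) (Ioc 0 1) := by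
  intro T₁ hT₁ T₂ hT₂ h
  have hr : 1 < T₂ / T₁ := (one_lt_div hT₁.1).mpr h
  have hZ : Zfun V T₁ < Zfun V T₂ ^ (T₂ / T₁) := by
    have := tsum_rpow_lt_rpow_tsum (x := fun r : V.f.Dom => boltzmann T₂ r.1)
      (fun r => (boltzmann_pos T₂ r.1).le) (V.summable_boltzmann hT₂.1 hT₂.2) hr
      (i := ⟨p, hp⟩) (boltzmann_pos T₂ p)
      (V.boltzmann_lt_Zfun hp hq hpq hT₂.1 hT₂.2)
    simpa only [boltzmann_rpow hT₁.1.ne' hT₂.1.ne', Zfun] using this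
  have hlog := Real.logb_lt_logb one_lt_two (V.Zfun_pos hT₁.1 hT₁.2) hZ
  rw [Real.logb_rpow_eq_mul_logb_of_pos (V.Zfun_pos hT₂.1 hT₂.2)] at hlog
  calc Ffun V T₂ = -T₁ * (T₂ / T₁ * Real.logb 2 (Zfun V T₂)) := by
        rw [Ffun]
        field_simp [hT₁.1.ne']
    _ < Ffun V T₁ := mul_lt_mul_of_neg_left hlog (neg_neg_of_pos hT₁.1)

lemma Ioo_subset_closure_setZ : Ioo 0 1 ⊆ closure (setZ V) := by
  by_cases hnil : [] ∈ V.f.Dom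
  · refine fun T hT => subset_closure ⟨hT, ?_⟩
    simpa [V.Zfun_eq_one_of_nil_mem hnil] using ComputableReal.ratCast 1
  · exact Ioo_subset_closure_setOf_computableReal
      (V.Zfun_continuousOn.mono Ioo_subset_Ioc_self)
      ((V.Zfun_strictMonoOn hnil).injOn.mono Ioo_subset_Ioc_self)

lemma Ioo_subset_closure_setF : Ioo 0 1 ⊆ closure (setF V) := by
  obtain ⟨p, hp⟩ := V.dom_nonempty
  by_cases hV : ∃ q ∈ V.f.Dom, q ≠ p
  · obtain ⟨q, hq, hqp⟩ := hV
    exact Ioo_subset_closure_setOf_computableReal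
      (V.Ffun_continuousOn.mono Ioo_subset_Ioc_self)
      ((V.Ffun_strictAntiOn hp hq hqp.symm).injOn.mono Ioo_subset_Ioc_self)
  · have hV : ∀ q ∈ V.f.Dom, q = p := by simpa using hV
    refine fun T hT => subset_closure ⟨hT, ?_⟩
    simpa [V.Ffun_eq_length hp hV hT.1.ne'] using ComputableReal.ratCast p.length

end Computer

theorem zSet_fSet_dense_general (V : Computer) :
    Set.Ioo (0 : ℝ) 1 ⊆ closure (setZ V) ∧ Set.Ioo (0 : ℝ) 1 ⊆ closure (setF V) :=
  ⟨V.Ioo_subset_closure_setZ, V.Ioo_subset_closure_setF⟩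

/-- For optimal `V`, each of `𝒵(V)` and `ℱ(V)` is dense in the
open interval `(0,1)`. -/
theorem zSet_fSet_dense (V : Computer) (hV : Optimal V) :
    Set.Ioo (0 : ℝ) 1 ⊆ closure (setZ V) ∧ Set.Ioo (0 : ℝ) 1 ⊆ closure (setF V) :=
  zSet_fSet_dense_general V
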